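/- arXiv:1411.3274 — 4 statements merged into one kernel-verified Lean document; each statement's English description precedes it below -/
import Mathlib

section
/- Let V be a real vector space with inner product g, and let u ∈ V with r² = g(u,u). Define a bilinear form G on V ⊕ V by G((X₁,X₂),(Y₁,Y₂)) = (a₁+a₃)g(X₁,Y₁) + (b₁+b₃)g(X₁,u)g(Y₁,u) + a₂(g(X₁,Y₂)+g(X₂,Y₁)) + b₂(g(X₁,u)g(Y₂,u)+g(X₂,u)g(Y₁,u)) + a₁g(X₂,Y₂) + b₁g(X₂,u)g(Y₂,u), where aⱼ,bⱼ are real constants. If a₁(a₁+a₃) − a₂² ≠ 0 and F₁(F₁+F₃) − F₂² ≠ 0 where Fⱼ = aⱼ + r²bⱼ, then G is non-degenerate. -/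
open RealInnerProductSpace

/-- Pointwise non-degeneracy criterion for g-natural metrics: if
`a₁(a₁+a₃) − a₂² ≠ 0` and `F₁(F₁+F₃) − F₂² ≠ 0` (with `Fⱼ = aⱼ + r²bⱼ`,
`r² = g(u,u)`), then the bilinear form `G` on `V ⊕ V` is non-degenerate. -/
theorem gnatural_nondegenerate
    {V : Type*} [NormedAddCommGroup V] [InnerProductSpace ℝ V]
    (u : V) (a₁ a₂ a₃ b₁ b₂ b₃ : ℝ)
    (G : V × V → V × V → ℝ)
    (hG : ∀ X Y : V × V, G X Y =
      (a₁ + a₃) * ⟪X.1, Y.1⟫ + (b₁ + b₃) * ⟪X.1, u⟫ * ⟪Y.1, u⟫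
      + a₂ * (⟪X.1, Y.2⟫ + ⟪X.2, Y.1⟫)
      + b₂ * (⟪X.1, u⟫ * ⟪Y.2, u⟫ + ⟪X.2, u⟫ * ⟪Y.1, u⟫)
      + a₁ * ⟪X.2, Y.2⟫ + b₁ * ⟪X.2, u⟫ * ⟪Y.2, u⟫)
    (ha : a₁ * (a₁ + a₃) - a₂ ^ 2 ≠ 0)
    (hF : (a₁ + ⟪u, u⟫ * b₁) * ((a₁ + ⟪u, u⟫ * b₁) + (a₃ + ⟪u, u⟫ * b₃))
        - (a₂ + ⟪u, u⟫ * b₂) ^ 2 ≠ 0) :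
    ∀ X : V × V, (∀ Y : V × V, G X Y = 0) → X = 0 := by
  intro X hX
  obtain ⟨X₁, X₂⟩ := X
  set q : ℝ := ⟪u, u⟫ with hq
  set s : ℝ := ⟪X₁, u⟫ with hs
  set t : ℝ := ⟪X₂, u⟫ with ht
  -- pairing with (Y, 0)
  have h1 : ∀ Y : V,
      (a₁ + a₃) * ⟪X₁, Y⟫ + a₂ * ⟪X₂, Y⟫ + ((b₁ + b₃) * s + b₂ * t) * ⟪Y, u⟫ = 0 := by
    intro Y
    have h := hX (Y, (0 : V))
    rw [hG] at h
    simp only [inner_zero_left, inner_zero_right] at h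
    linarith
  -- pairing with (0, Y)
  have h2 : ∀ Y : V,
      a₂ * ⟪X₁, Y⟫ + a₁ * ⟪X₂, Y⟫ + (b₂ * s + b₁ * t) * ⟪Y, u⟫ = 0 := by
    intro Y
    have h := hX ((0 : V), Y)
    rw [hG] at h
    simp only [inner_zero_left, inner_zero_right] at h
    linarith
  -- vector form
  have hv1 : (a₁ + a₃) • X₁ + a₂ • X₂ + ((b₁ + b₃) * s + b₂ * t) • u = 0 := by
    have key : ∀ Y : V,
        ⟪(a₁ + a₃) • X₁ + a₂ • X₂ + ((b₁ + b₃) * s + b₂ * t) • u, Y⟫ = 0 := by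
      intro Y
      have := h1 Y
      rw [real_inner_comm u Y] at this
      simp only [inner_add_left, real_inner_smul_left]
      linarith
    have := key ((a₁ + a₃) • X₁ + a₂ • X₂ + ((b₁ + b₃) * s + b₂ * t) • u)
    exact inner_self_eq_zero.mp this
  have hv2 : a₂ • X₁ + a₁ • X₂ + (b₂ * s + b₁ * t) • u = 0 := by
    have key : ∀ Y : V,
        ⟪a₂ • X₁ + a₁ • X₂ + (b₂ * s + b₁ * t) • u, Y⟫ = 0 := by
      intro Y
      have := h2 Y
      rw [real_inner_comm u Y] at this
      simp only [inner_add_left, real_inner_smul_left]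
      linarith
    have := key (a₂ • X₁ + a₁ • X₂ + (b₂ * s + b₁ * t) • u)
    exact inner_self_eq_zero.mp this
  -- scalar equations from pairing with u
  have e1 : ((a₁ + a₃) + q * (b₁ + b₃)) * s + (a₂ + q * b₂) * t = 0 := by
    have := h1 u
    rw [← hs, ← ht, ← hq] at this
    ring_nf
    ring_nf at this
    linarith
  have e2 : (a₂ + q * b₂) * s + (a₁ + q * b₁) * t = 0 := by
    have := h2 u
    rw [← hs, ← ht, ← hq] at this
    ring_nf
    ring_nf at this
    linarith
  -- solve for s, t using hF
  have hdet : (a₁ + q * b₁) * ((a₁ + q * b₁) + (a₃ + q * b₃)) - (a₂ + q * b₂) ^ 2 ≠ 0 := hF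
  have hs0 : s = 0 := by
    have h3 : ((a₁ + q * b₁) * ((a₁ + q * b₁) + (a₃ + q * b₃)) - (a₂ + q * b₂) ^ 2) * s
        = (a₁ + q * b₁) * (((a₁ + a₃) + q * (b₁ + b₃)) * s + (a₂ + q * b₂) * t)
          - (a₂ + q * b₂) * ((a₂ + q * b₂) * s + (a₁ + q * b₁) * t) := by ring
    rw [e1, e2] at h3
    simp only [mul_zero, sub_zero] at h3
    exact (mul_eq_zero.mp h3).resolve_left hdet
  have ht0 : t = 0 := by
    have h3 : ((a₁ + q * b₁) * ((a₁ + q * b₁) + (a₃ + q * b₃)) - (a₂ + q * b₂) ^ 2) * t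
        = ((a₁ + a₃) + q * (b₁ + b₃)) * ((a₂ + q * b₂) * s + (a₁ + q * b₁) * t)
          - (a₂ + q * b₂) * (((a₁ + a₃) + q * (b₁ + b₃)) * s + (a₂ + q * b₂) * t) := by ring
    rw [e1, e2] at h3
    simp only [mul_zero, sub_zero] at h3
    exact (mul_eq_zero.mp h3).resolve_left hdet
  rw [hs0, ht0] at hv1 hv2
  simp only [mul_zero, add_zero, zero_smul] at hv1 hv2
  -- solve for X₁, X₂ using ha
  have hX1 : (a₁ * (a₁ + a₃) - a₂ ^ 2) • X₁ = 0 := by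
    have : (a₁ * (a₁ + a₃) - a₂ ^ 2) • X₁
        = a₁ • ((a₁ + a₃) • X₁ + a₂ • X₂) - a₂ • (a₂ • X₁ + a₁ • X₂) := by
      simp only [smul_add, smul_smul, smul_sub, sub_smul]
      module
    rw [hv1, hv2] at this
    simpa using this
  have hX2 : (a₁ * (a₁ + a₃) - a₂ ^ 2) • X₂ = 0 := by
    have : (a₁ * (a₁ + a₃) - a₂ ^ 2) • X₂
        = (a₁ + a₃) • (a₂ • X₁ + a₁ • X₂) - a₂ • ((a₁ + a₃) • X₁ + a₂ • X₂) := by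
      module
    rw [hv1, hv2] at this
    simpa using this
  have hX1' : X₁ = 0 := by
    rcases smul_eq_zero.mp hX1 with h | h
    · exact absurd h ha
    · exact h
  have hX2' : X₂ = 0 := by
    rcases smul_eq_zero.mp hX2 with h | h
    · exact absurd h ha
    · exact h
  simp [hX1', hX2', Prod.ext_iff]
end

section
/- Let G be the symmetric bilinear form on V ⊕ V given by G((X₁,X₂),(Y₁,Y₂)) = a₂(g(X₁,Y₂)+g(X₂,Y₁)) + a₁·g(X₂,Y₂), with a₂ ≠ 0, a₁ < 0. For η ∈ V set S = (a₁/(√3·√|a₁|·a₂))(η,0) + (1/(√3·√|a₁|))(0,η) and T = (2a₁/(√3·√|a₁|·a₂))(η,0) − (1/(√3·√|a₁|))(0,η). Then G(S,S') = −g(η,η'), G(S,T') = 0, and G(T,T') = g(η,η'). -/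
open RealInnerProductSpace

/-- Case 3 of the orthonormal normal frame construction: `A = 0`, `a₂ ≠ 0`,
`a₁ < 0`. -/
theorem normal_frame_case3
    {V : Type*} [NormedAddCommGroup V] [InnerProductSpace ℝ V]
    (a₁ a₂ : ℝ) (ha₂ : a₂ ≠ 0) (ha₁ : a₁ < 0)
    (G : V × V → V × V → ℝ)
    (hG : ∀ X Y : V × V, G X Y = a₂ * (⟪X.1, Y.2⟫ + ⟪X.2, Y.1⟫) + a₁ * ⟪X.2, Y.2⟫)
    (η η' : V)
    (S S' T T' : V × V)
    (hS : S = (a₁ / (Real.sqrt 3 * Real.sqrt |a₁| * a₂)) • ((η, 0) : V × V)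
            + (1 / (Real.sqrt 3 * Real.sqrt |a₁|)) • ((0, η) : V × V))
    (hS' : S' = (a₁ / (Real.sqrt 3 * Real.sqrt |a₁| * a₂)) • ((η', 0) : V × V)
            + (1 / (Real.sqrt 3 * Real.sqrt |a₁|)) • ((0, η') : V × V))
    (hT : T = (2 * a₁ / (Real.sqrt 3 * Real.sqrt |a₁| * a₂)) • ((η, 0) : V × V)
            - (1 / (Real.sqrt 3 * Real.sqrt |a₁|)) • ((0, η) : V × V))
    (hT' : T' = (2 * a₁ / (Real.sqrt 3 * Real.sqrt |a₁| * a₂)) • ((η', 0) : V × V)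
            - (1 / (Real.sqrt 3 * Real.sqrt |a₁|)) • ((0, η') : V × V)) :
    G S S' = -⟪η, η'⟫ ∧ G S T' = 0 ∧ G T T' = ⟪η, η'⟫ := by

  subst hS hS' hT hT'
  set s := Real.sqrt 3 * Real.sqrt |a₁| with hsdef
  have hs : s ^ 2 = -(3 * a₁) := by
    rw [hsdef, mul_pow, Real.sq_sqrt (by norm_num : (0:ℝ) ≤ 3), Real.sq_sqrt (abs_nonneg _),
      abs_of_neg ha₁]; ring
  clear_value s
  clear hsdef
  have hsn : s ≠ 0 := by
    intro h; rw [h] at hs; nlinarith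
  have h4 : s ^ 4 = 9 * a₁ ^ 2 := by rw [show s ^ 4 = (s ^ 2) ^ 2 by ring, hs]; ring
  have h6 : s ^ 6 = -(27 * a₁ ^ 3) := by rw [show s ^ 6 = (s ^ 2) ^ 3 by ring, hs]; ring
  refine ⟨?_, ?_, ?_⟩ <;>
  · rw [hG]
    simp only [Prod.fst_add, Prod.snd_add, Prod.fst_sub, Prod.snd_sub,
      Prod.smul_fst, Prod.smul_snd, smul_zero, add_zero, zero_add,
      sub_zero, zero_sub, inner_smul_left, inner_smul_right, inner_zero_left,
      inner_zero_right, inner_neg_left, inner_neg_right, RCLike.ofReal_real_eq_id, id,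
      conj_trivial, mul_zero, smul_eq_mul]
    field_simp
    ring_nf
    try simp only [hs, h4, h6]
    try ring
end

section
/- Let G be the symmetric bilinear form on V ⊕ V given by G((X₁,X₂),(Y₁,Y₂)) = a₂(g(X₁,Y₂)+g(X₂,Y₁)) + a₁·g(X₂,Y₂), with a₂ ≠ 0, a₁ > 0. For η ∈ V set S = (a₁/(√a₁·a₂))(η,0) − (1/√a₁)(0,η) and T = (1/√a₁)(0,η). Then G(S,S') = −g(η,η'), G(S,T') = 0, and G(T,T') = g(η,η'). -/
open RealInnerProductSpace

/-!
On pairs `(c • x, d • x)` with a common direction the form `G` is `⟪x, y⟫` times the value of the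
quadratic form `a₂ (c d' + d c') + a₁ d d'` on the coefficient vectors, so the three identities
reduce to arithmetic with `√a₁ ^ 2 = a₁`.
-/

theorem apply_smul_pair_smul_pair {V : Type*} [NormedAddCommGroup V] [InnerProductSpace ℝ V]
    (a₁ a₂ : ℝ) (G : V × V → V × V → ℝ)
    (hG : ∀ X Y : V × V, G X Y = a₂ * (⟪X.1, Y.2⟫ + ⟪X.2, Y.1⟫) + a₁ * ⟪X.2, Y.2⟫)
    (x y : V) (c d c' d' : ℝ) :
    G (c • x, d • x) (c' • y, d' • y) = (a₂ * (c * d' + d * c') + a₁ * (d * d')) * ⟪x, y⟫ := by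
  simp only [hG, real_inner_smul_left, real_inner_smul_right]
  ring

theorem smul_inl_sub_smul_inr_eq_mk {V : Type*} [AddCommGroup V] [Module ℝ V] (c d : ℝ) (x : V) :
    c • ((x, 0) : V × V) - d • ((0, x) : V × V) = (c • x, (-d) • x) := by
  ext <;> simp

theorem smul_inr_eq_mk {V : Type*} [AddCommGroup V] [Module ℝ V] (d : ℝ) (x : V) :
    d • ((0, x) : V × V) = ((0 : ℝ) • x, d • x) := by
  ext <;> simp

/-- Case 4 of the orthonormal normal frame construction: `A = 0`, `a₂ ≠ 0`,
`a₁ > 0`. -/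
theorem normal_frame_case4
    {V : Type*} [NormedAddCommGroup V] [InnerProductSpace ℝ V]
    (a₁ a₂ : ℝ) (ha₂ : a₂ ≠ 0) (ha₁ : 0 < a₁)
    (G : V × V → V × V → ℝ)
    (hG : ∀ X Y : V × V, G X Y = a₂ * (⟪X.1, Y.2⟫ + ⟪X.2, Y.1⟫) + a₁ * ⟪X.2, Y.2⟫)
    (η η' : V)
    (S S' T T' : V × V)
    (hS : S = (a₁ / (Real.sqrt a₁ * a₂)) • ((η, 0) : V × V)
            - (1 / Real.sqrt a₁) • ((0, η) : V × V))
    (hS' : S' = (a₁ / (Real.sqrt a₁ * a₂)) • ((η', 0) : V × V)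
            - (1 / Real.sqrt a₁) • ((0, η') : V × V))
    (hT : T = (1 / Real.sqrt a₁) • ((0, η) : V × V))
    (hT' : T' = (1 / Real.sqrt a₁) • ((0, η') : V × V)) :
    G S S' = -⟪η, η'⟫ ∧ G S T' = 0 ∧ G T T' = ⟪η, η'⟫ := by
  subst hS hS' hT hT'
  rw [smul_inl_sub_smul_inr_eq_mk, smul_inl_sub_smul_inr_eq_mk, smul_inr_eq_mk, smul_inr_eq_mk]
  simp only [apply_smul_pair_smul_pair a₁ a₂ G hG]
  have hsq : Real.sqrt a₁ ^ 2 = a₁ := Real.sq_sqrt ha₁.le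
  have hs : Real.sqrt a₁ ≠ 0 := (Real.sqrt_pos.mpr ha₁).ne'
  refine ⟨?_, ?_, ?_⟩ <;> field_simp
  · linear_combination ⟪η, η'⟫ * hsq
  · linear_combination
  · linear_combination -⟪η, η'⟫ * hsq
end

section
/- Let G be the symmetric bilinear form on V ⊕ V given by G((X₁,X₂),(Y₁,Y₂)) = A·g(X₁,Y₁) + a₂(g(X₁,Y₂)+g(X₂,Y₁)), with a₂ ≠ 0 and A < 0. For η ∈ V set S = (A/(√3·√|A|·a₂))(0,η) + (1/(√3·√|A|))(η,0) and T = (2A/(√3·√|A|·a₂))(0,η) − (1/(√3·√|A|))(η,0). Then G(S,S') = −g(η,η'), G(S,T') = 0, and G(T,T') = g(η,η'). -/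
open RealInnerProductSpace

/-!
Both `S` and `T` lie on the line `{(x • η, y • η)}`, on which the form is
`G ((x • η, y • η), (x' • η', y' • η')) = (A x x' + a₂ (x y' + y x')) ⟪η, η'⟫`.
With `c = 1 / (√3 √|A|)` the coefficient pairs are `(c, A c / a₂)` for `S` and
`(-c, 2 A c / a₂)` for `T`, so the three values are `3 A c²`, `0` and `-3 A c²`,
and `3 A c² = -1` because `|A| = -A`.
-/

section

variable {V : Type*} [NormedAddCommGroup V] [InnerProductSpace ℝ V]

lemma smul_inr_add_smul_inl (b c : ℝ) (η : V) :
    b • ((0, η) : V × V) + c • ((η, 0) : V × V) = (c • η, b • η) := by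
  ext <;> simp

lemma smul_inr_sub_smul_inl (b c : ℝ) (η : V) :
    b • ((0, η) : V × V) - c • ((η, 0) : V × V) = ((-c) • η, b • η) := by
  ext <;> simp

lemma form_smul_smul (A a₂ x y x' y' : ℝ) (η η' : V) :
    A * ⟪x • η, x' • η'⟫ + a₂ * (⟪x • η, y' • η'⟫ + ⟪y • η, x' • η'⟫)
      = (A * x * x' + a₂ * (x * y' + y * x')) * ⟪η, η'⟫ := by
  simp only [real_inner_smul_left, real_inner_smul_right]
  ring

end

lemma three_mul_mul_sq_inv_sqrt_three_mul_sqrt_abs {A : ℝ} (hA : A < 0) :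
    3 * A * (1 / (Real.sqrt 3 * Real.sqrt |A|)) ^ 2 = -1 := by
  rw [div_pow, mul_pow, Real.sq_sqrt (by norm_num), Real.sq_sqrt (abs_nonneg A),
    abs_of_neg hA]
  field_simp [hA.ne]

/-- Case 5 of the orthonormal normal frame construction: `a₁ = 0`, `a₂ ≠ 0`,
`A < 0`. -/
theorem normal_frame_case5
    {V : Type*} [NormedAddCommGroup V] [InnerProductSpace ℝ V]
    (A a₂ : ℝ) (ha₂ : a₂ ≠ 0) (hA : A < 0)
    (G : V × V → V × V → ℝ)
    (hG : ∀ X Y : V × V, G X Y = A * ⟪X.1, Y.1⟫ + a₂ * (⟪X.1, Y.2⟫ + ⟪X.2, Y.1⟫))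
    (η η' : V)
    (S S' T T' : V × V)
    (hS : S = (A / (Real.sqrt 3 * Real.sqrt |A| * a₂)) • ((0, η) : V × V)
            + (1 / (Real.sqrt 3 * Real.sqrt |A|)) • ((η, 0) : V × V))
    (hS' : S' = (A / (Real.sqrt 3 * Real.sqrt |A| * a₂)) • ((0, η') : V × V)
            + (1 / (Real.sqrt 3 * Real.sqrt |A|)) • ((η', 0) : V × V))
    (hT : T = (2 * A / (Real.sqrt 3 * Real.sqrt |A| * a₂)) • ((0, η) : V × V)
            - (1 / (Real.sqrt 3 * Real.sqrt |A|)) • ((η, 0) : V × V))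
    (hT' : T' = (2 * A / (Real.sqrt 3 * Real.sqrt |A| * a₂)) • ((0, η') : V × V)
            - (1 / (Real.sqrt 3 * Real.sqrt |A|)) • ((η', 0) : V × V)) :
    G S S' = -⟪η, η'⟫ ∧ G S T' = 0 ∧ G T T' = ⟪η, η'⟫ := by
  set c := 1 / (Real.sqrt 3 * Real.sqrt |A|) with hc_def
  have hc : 3 * A * c ^ 2 = -1 := three_mul_mul_sq_inv_sqrt_three_mul_sqrt_abs hA
  have hb : A / (Real.sqrt 3 * Real.sqrt |A| * a₂) = A * c / a₂ := by
    rw [hc_def]; ring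
  have hb₂ : 2 * A / (Real.sqrt 3 * Real.sqrt |A| * a₂) = 2 * (A * c / a₂) := by
    rw [hc_def]; ring
  rw [hb, smul_inr_add_smul_inl] at hS hS'
  rw [hb₂, smul_inr_sub_smul_inl] at hT hT'
  subst hS hS' hT hT'
  clear_value c
  simp only [hG, form_smul_smul]
  refine ⟨?_, ?_, ?_⟩ <;> field_simp
  · linear_combination ⟪η, η'⟫ * hc
  · ring
  · linear_combination -⟪η, η'⟫ * hc
end
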